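/- arXiv:2003.10193 — 2 statements merged into one kernel-verified Lean document; each statement's English description precedes it below -/
import Mathlib

section
/- The asymptotic means of the splitting schemes satisfy $\mathbb{E}[\widetilde{Y}^{L2}_\infty] = \mathbb{E}[\widetilde{Y}^{L1}_\infty] e^{\Delta/\tau}$, $\mathbb{E}[\widetilde{Y}^{S1}_\infty] = \frac{1}{2}\mathbb{E}[\widetilde{Y}^{L1}_\infty](1+e^{\Delta/\tau})$, and $\mathbb{E}[\widetilde{Y}^{S2}_\infty] = \mathbb{E}[\widetilde{Y}^{L1}_\infty] e^{\Delta/2\tau}$, where $\mathbb{E}[\widetilde{Y}^{L1}_\infty] = \mu\tau\frac{\Delta/\tau}{e^{\Delta/\tau}-1}$. -/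
/-!
Each scheme has the form `Y (i + 1) = Y i * G i + H i`, where `(G i, H i)` is built from the
noise of step `i` and is therefore independent of `Y i`. Hence the means obey the scalar
recursion `m (i + 1) = m i * E[G] + E[H]`. The multiplier is lognormal with
`E[G] = exp (-Δ/τ) < 1` (for S2 because `φ i + ψ i ~ N(0, Δ)`), so the means converge to
`E[H] / (1 - exp (-Δ/τ))`, which is rewritten in terms of `E[Y^{L1}_∞]`.
-/

open MeasureTheory ProbabilityTheory Filter Real Topology

open scoped NNReal

section GaussianExponential

variable {Ω : Type*} {mΩ : MeasurableSpace Ω} {μ : Measure Ω} {X : Ω → ℝ} {v : ℝ≥0}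

lemma integrable_exp_add_mul_of_map_eq_gaussianReal [NeZero μ] (hX : μ.map X = gaussianReal 0 v)
    (c t : ℝ) : Integrable (fun ω ↦ exp (c + t * X ω)) μ := by
  have h : Integrable (fun ω ↦ exp (t * X ω)) μ := by
    rw [← mgf_pos_iff, mgf_gaussianReal hX]
    exact exp_pos _
  simpa only [exp_add] using h.const_mul (exp c)

lemma integral_exp_add_mul_of_map_eq_gaussianReal (hX : μ.map X = gaussianReal 0 v)
    (c t : ℝ) : μ[fun ω ↦ exp (c + t * X ω)] = exp (c + v * t ^ 2 / 2) := by
  have h := mgf_gaussianReal hX t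
  rw [mgf] at h
  simp only [exp_add, integral_const_mul, h, zero_mul, zero_add]

/-- The Itô correction `-σ²v/2` cancels the lognormal factor `E[exp (σ X)] = exp (σ²v/2)`. -/
lemma integral_exp_drift_of_map_eq_gaussianReal (hX : μ.map X = gaussianReal 0 v) (τ σ : ℝ) :
    μ[fun ω ↦ exp (-(1 / τ + σ ^ 2 / 2) * v + σ * X ω)] = exp (-(v / τ)) := by
  rw [integral_exp_add_mul_of_map_eq_gaussianReal hX]
  ring_nf

end GaussianExponential

section Independence

variable {Ω : Type*} {mΩ : MeasurableSpace Ω} {μ : Measure Ω}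

lemma ProbabilityTheory.Indep.indepFun_of_measurable {m₁ m₂ : MeasurableSpace Ω} {β γ : Type*}
    {mβ : MeasurableSpace β} {mγ : MeasurableSpace γ} {f : Ω → β} {g : Ω → γ}
    (h : Indep m₁ m₂ μ) (hf : Measurable[m₁] f) (hg : Measurable[m₂] g) : IndepFun f g μ :=
  indep_of_indep_of_le_right (indep_of_indep_of_le_left h hf.comap_le) hg.comap_le

lemma ProbabilityTheory.iIndep.indep_iSup_lt {m : ℕ → MeasurableSpace Ω}
    (h_le : ∀ i, m i ≤ mΩ) (h : iIndep m μ) (i : ℕ) : Indep (⨆ j < i, m j) (m i) μ := by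
  simpa using indep_iSup_of_disjoint h_le h (S := Set.Iio i) (T := {i}) (by simp)

lemma ProbabilityTheory.iIndep.indep_iSup_lt_iSup_prod {κ : Type*}
    {s : ℕ × κ → MeasurableSpace Ω} (h_le : ∀ p, s p ≤ mΩ) (h : iIndep s μ) (i : ℕ) :
    Indep (⨆ j < i, ⨆ k, s (j, k)) (⨆ k, s (i, k)) μ := by
  have hST : Disjoint {p : ℕ × κ | p.1 < i} {p | p.1 = i} :=
    Set.disjoint_left.2 fun p hlt heq ↦ hlt.ne heq
  refine indep_of_indep_of_le_right
    (indep_of_indep_of_le_left (indep_iSup_of_disjoint h_le h hST) ?_) ?_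
  · exact iSup₂_le fun j hj ↦ iSup_le fun k ↦ le_biSup s (show (j, k).1 < i from hj)
  · exact iSup_le fun k ↦ le_biSup s (show (i, k).1 = i from rfl)

end Independence

section AffineRecursion

lemma tendsto_of_affine_recurrence {u : ℕ → ℝ} {a c : ℝ} (ha : |a| < 1)
    (hu : ∀ i, u (i + 1) = u i * a + c) : Tendsto u atTop (𝓝 (c / (1 - a))) := by
  have h1a : 1 - a ≠ 0 := by linarith [le_abs_self a]
  have hclosed : ∀ i, u i = a ^ i * (u 0 - c / (1 - a)) + c / (1 - a) := by
    intro i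
    induction i with
    | zero => ring
    | succ i ih =>
      rw [hu, ih]
      field_simp
      ring
  rw [funext hclosed]
  simpa using ((tendsto_pow_atTop_nhds_zero_of_abs_lt_one ha).mul_const
    (u 0 - c / (1 - a))).add_const (c / (1 - a))

variable {Ω : Type*} {mΩ : MeasurableSpace Ω} {μ : Measure Ω} {m : ℕ → MeasurableSpace Ω}
  {G H Y : ℕ → Ω → ℝ} {y₀ : ℝ}

lemma measurable_integrable_of_affine_recursion [IsFiniteMeasure μ]
    (hindep : ∀ i, Indep (⨆ j < i, m j) (m i) μ)
    (hGm : ∀ i, Measurable[m i] (G i)) (hHm : ∀ i, Measurable[m i] (H i))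
    (hGi : ∀ i, Integrable (G i) μ) (hHi : ∀ i, Integrable (H i) μ)
    (hY0 : ∀ ω, Y 0 ω = y₀) (hrec : ∀ i ω, Y (i + 1) ω = Y i ω * G i ω + H i ω) (i : ℕ) :
    Measurable[⨆ j < i, m j] (Y i) ∧ Integrable (Y i) μ := by
  induction i with
  | zero =>
    rw [funext hY0]
    exact ⟨measurable_const, integrable_const y₀⟩
  | succ i ih =>
    obtain ⟨hYm, hYi⟩ := ih
    have hpast : (⨆ j < i, m j) ≤ ⨆ j < i + 1, m j :=
      iSup₂_le fun j hj ↦ le_iSup₂_of_le j (Nat.lt_succ_of_lt hj) le_rfl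
    have hnew : m i ≤ ⨆ j < i + 1, m j := le_iSup₂_of_le i (Nat.lt_succ_self i) le_rfl
    have hIF : IndepFun (Y i) (G i) μ := (hindep i).indepFun_of_measurable hYm (hGm i)
    rw [funext (hrec i)]
    exact ⟨((hYm.mono hpast le_rfl).mul ((hGm i).mono hnew le_rfl)).add
      ((hHm i).mono hnew le_rfl), (hIF.integrable_mul hYi (hGi i)).add (hHi i)⟩

theorem tendsto_integral_of_affine_recursion [IsFiniteMeasure μ] {a c : ℝ}
    (hindep : ∀ i, Indep (⨆ j < i, m j) (m i) μ)
    (hGm : ∀ i, Measurable[m i] (G i)) (hHm : ∀ i, Measurable[m i] (H i))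
    (hGi : ∀ i, Integrable (G i) μ) (hHi : ∀ i, Integrable (H i) μ)
    (hGe : ∀ i, μ[G i] = a) (hHe : ∀ i, μ[H i] = c) (ha : |a| < 1)
    (hY0 : ∀ ω, Y 0 ω = y₀) (hrec : ∀ i ω, Y (i + 1) ω = Y i ω * G i ω + H i ω) :
    Tendsto (fun i ↦ μ[Y i]) atTop (𝓝 (c / (1 - a))) := by
  refine tendsto_of_affine_recurrence ha fun i ↦ ?_
  obtain ⟨hYm, hYi⟩ :=
    measurable_integrable_of_affine_recursion hindep hGm hHm hGi hHi hY0 hrec i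
  have hIF : IndepFun (Y i) (G i) μ := (hindep i).indepFun_of_measurable hYm (hGm i)
  simp_rw [hrec i]
  rw [integral_add (by exact hIF.integrable_mul hYi (hGi i)) (hHi i),
    hIF.integral_fun_mul_eq_mul_integral hYi.aestronglyMeasurable (hGi i).aestronglyMeasurable,
    hGe, hHe]

end AffineRecursion

section Schemes

lemma abs_exp_neg_lt_one {x : ℝ} (hx : 0 < x) : |exp (-x)| < 1 := by
  rw [abs_of_pos (exp_pos _), exp_lt_one_iff]
  linarith

variable {Ω : Type*} {mΩ : MeasurableSpace Ω} {μ : Measure Ω} [IsProbabilityMeasure μ]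
  {ξ : ℕ → Ω → ℝ} {τ σ μ' y₀ : ℝ} {Δ : ℝ≥0}

lemma tendsto_integral_schemeL2 (hτ : 0 < τ) (hΔ : 0 < (Δ : ℝ))
    (hmeas : ∀ i, Measurable (ξ i)) (hindep : iIndepFun ξ μ)
    (hgauss : ∀ i, μ.map (ξ i) = gaussianReal 0 Δ) {Y : ℕ → Ω → ℝ} (hY0 : ∀ ω, Y 0 ω = y₀)
    (hrec : ∀ i ω, Y (i + 1) ω
      = Y i ω * exp (-(1 / τ + σ ^ 2 / 2) * (Δ : ℝ) + σ * ξ i ω) + μ' * (Δ : ℝ)) :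
    Tendsto (fun i ↦ μ[Y i]) atTop
      (𝓝 (μ' * τ * (((Δ : ℝ) / τ) / (exp ((Δ : ℝ) / τ) - 1)) * exp ((Δ : ℝ) / τ))) := by
  have hlim := tendsto_integral_of_affine_recursion (H := fun _ _ ↦ μ' * Δ) (c := μ' * Δ)
    (((iIndepFun_iff_iIndep _ _ _).1 hindep).indep_iSup_lt (fun i ↦ (hmeas i).comap_le))
    (fun i ↦ (((comap_measurable (ξ i)).const_mul σ).const_add _).exp)
    (fun _ ↦ measurable_const)
    (fun i ↦ integrable_exp_add_mul_of_map_eq_gaussianReal (hgauss i) _ _)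
    (fun _ ↦ integrable_const _)
    (fun i ↦ integral_exp_drift_of_map_eq_gaussianReal (hgauss i) τ σ) (fun _ ↦ by simp)
    (abs_exp_neg_lt_one (div_pos hΔ hτ)) hY0 hrec
  convert hlim using 2
  have hden := (sub_pos.2 (one_lt_exp_iff.2 (div_pos hΔ hτ))).ne'
  rw [exp_neg]
  field_simp

lemma tendsto_integral_schemeS1 (hτ : 0 < τ) (hΔ : 0 < (Δ : ℝ))
    (hmeas : ∀ i, Measurable (ξ i)) (hindep : iIndepFun ξ μ)
    (hgauss : ∀ i, μ.map (ξ i) = gaussianReal 0 Δ) {Y : ℕ → Ω → ℝ} (hY0 : ∀ ω, Y 0 ω = y₀)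
    (hrec : ∀ i ω, Y (i + 1) ω
      = (Y i ω + μ' * (Δ : ℝ) / 2) * exp (-(1 / τ + σ ^ 2 / 2) * (Δ : ℝ) + σ * ξ i ω)
        + μ' * (Δ : ℝ) / 2) :
    Tendsto (fun i ↦ μ[Y i]) atTop
      (𝓝 (1 / 2 * (μ' * τ * (((Δ : ℝ) / τ) / (exp ((Δ : ℝ) / τ) - 1)))
          * (1 + exp ((Δ : ℝ) / τ)))) := by
  set G : ℕ → Ω → ℝ := fun i ω ↦ exp (-(1 / τ + σ ^ 2 / 2) * (Δ : ℝ) + σ * ξ i ω)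
  have hGm (i : ℕ) : Measurable[(borel ℝ).comap (ξ i)] (G i) :=
    (((comap_measurable (ξ i)).const_mul σ).const_add _).exp
  have hGi (i : ℕ) : Integrable (G i) μ :=
    integrable_exp_add_mul_of_map_eq_gaussianReal (hgauss i) _ _
  have hGe (i : ℕ) : μ[G i] = exp (-((Δ : ℝ) / τ)) :=
    integral_exp_drift_of_map_eq_gaussianReal (hgauss i) τ σ
  have hlim := tendsto_integral_of_affine_recursion
    (H := fun i ω ↦ μ' * Δ / 2 * G i ω + μ' * Δ / 2)
    (c := μ' * Δ / 2 * exp (-((Δ : ℝ) / τ)) + μ' * Δ / 2)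
    (((iIndepFun_iff_iIndep _ _ _).1 hindep).indep_iSup_lt (fun i ↦ (hmeas i).comap_le))
    hGm (fun i ↦ ((hGm i).const_mul _).add_const _) hGi
    (fun i ↦ ((hGi i).const_mul _).add (integrable_const _)) hGe
    (fun i ↦ by rw [integral_add ((hGi i).const_mul _) (integrable_const _),
      integral_const_mul, hGe]; simp)
    (abs_exp_neg_lt_one (div_pos hΔ hτ)) hY0 (fun i ω ↦ by rw [hrec]; ring)
  convert hlim using 2
  have hden := (sub_pos.2 (one_lt_exp_iff.2 (div_pos hΔ hτ))).ne'
  rw [exp_neg]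
  field_simp

lemma tendsto_integral_schemeS2 (hτ : 0 < τ) (hΔ : 0 < (Δ : ℝ)) {φ ψ : ℕ → Ω → ℝ}
    (hmeasφ : ∀ i, Measurable (φ i)) (hmeasψ : ∀ i, Measurable (ψ i))
    (hindep : iIndepFun (fun p : ℕ × Bool ↦ if p.2 then φ p.1 else ψ p.1) μ)
    (hgaussφ : ∀ i, μ.map (φ i) = gaussianReal 0 (Δ / 2))
    (hgaussψ : ∀ i, μ.map (ψ i) = gaussianReal 0 (Δ / 2))
    {Y : ℕ → Ω → ℝ} (hY0 : ∀ ω, Y 0 ω = y₀)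
    (hrec : ∀ i ω, Y (i + 1) ω
      = Y i ω * exp (-(1 / τ + σ ^ 2 / 2) * (Δ : ℝ) + σ * (φ i ω + ψ i ω))
        + μ' * (Δ : ℝ) * exp (-(1 / τ + σ ^ 2 / 2) * ((Δ : ℝ) / 2) + σ * ψ i ω)) :
    Tendsto (fun i ↦ μ[Y i]) atTop
      (𝓝 (μ' * τ * (((Δ : ℝ) / τ) / (exp ((Δ : ℝ) / τ) - 1)) * exp ((Δ : ℝ) / (2 * τ)))) := by
  set s : ℕ × Bool → MeasurableSpace Ω := fun p ↦ (borel ℝ).comap (if p.2 then φ p.1 else ψ p.1)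
  have hs_le (p : ℕ × Bool) : s p ≤ mΩ := by
    rcases p with ⟨i, _ | _⟩
    exacts [(hmeasψ i).comap_le, (hmeasφ i).comap_le]
  have hφm (i : ℕ) : Measurable[⨆ k, s (i, k)] (φ i) :=
    (comap_measurable (φ i)).mono (le_iSup_of_le true le_rfl) le_rfl
  have hψm (i : ℕ) : Measurable[⨆ k, s (i, k)] (ψ i) :=
    (comap_measurable (ψ i)).mono (le_iSup_of_le false le_rfl) le_rfl
  have hsum (i : ℕ) : μ.map (φ i + ψ i) = gaussianReal 0 Δ := by
    have hφψ : IndepFun (φ i) (ψ i) μ := by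
      simpa using hindep.indepFun (show ((i, true) : ℕ × Bool) ≠ (i, false) by simp)
    rw [gaussianReal_add_gaussianReal_of_indepFun hφψ (hgaussφ i) (hgaussψ i), add_zero,
      add_halves]
  have hlim := tendsto_integral_of_affine_recursion
    (c := μ' * Δ * exp (-((Δ : ℝ) / (2 * τ))))
    (((iIndepFun_iff_iIndep _ _ _).1 hindep).indep_iSup_lt_iSup_prod hs_le)
    (fun i ↦ ((((hφm i).add (hψm i)).const_mul σ).const_add _).exp)
    (fun i ↦ ((((hψm i).const_mul σ).const_add _).exp).const_mul _)
    (fun i ↦ integrable_exp_add_mul_of_map_eq_gaussianReal (hsum i) _ _)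
    (fun i ↦ (integrable_exp_add_mul_of_map_eq_gaussianReal (hgaussψ i) _ _).const_mul _)
    (fun i ↦ integral_exp_drift_of_map_eq_gaussianReal (hsum i) τ σ)
    (fun i ↦ by
      have h := integral_exp_drift_of_map_eq_gaussianReal (hgaussψ i) τ σ
      push_cast at h
      rw [integral_const_mul, h, div_div, mul_comm 2 τ])
    (abs_exp_neg_lt_one (div_pos hΔ hτ)) hY0 hrec
  convert hlim using 2
  have hsq : exp ((Δ : ℝ) / τ) = exp ((Δ : ℝ) / (2 * τ)) ^ 2 := by
    rw [← exp_nat_mul]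
    congr 1
    push_cast
    field_simp
  have hden := hsq ▸ (sub_pos.2 (one_lt_exp_iff.2 (div_pos hΔ hτ))).ne'
  rw [exp_neg, exp_neg, hsq]
  field_simp

end Schemes

theorem splitting_asymptotic_means_general
    {Ω : Type*} [MeasurableSpace Ω] (μ : Measure Ω) [IsProbabilityMeasure μ]
    (ξ φ ψ : ℕ → Ω → ℝ) (τ σ μ' y0 : ℝ) (Δ : NNReal)
    (hτ : 0 < τ) (hΔ : 0 < (Δ : ℝ))
    (hmeasξ : ∀ i, Measurable (ξ i))
    (hmeasφ : ∀ i, Measurable (φ i)) (hmeasψ : ∀ i, Measurable (ψ i))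
    (hindepξ : iIndepFun ξ μ)
    (hindepφψ : iIndepFun
      (fun p : ℕ × Bool => if p.2 then φ p.1 else ψ p.1) μ)
    (hgaussξ : ∀ i, Measure.map (ξ i) μ = gaussianReal 0 Δ)
    (hgaussφ : ∀ i, Measure.map (φ i) μ = gaussianReal 0 (Δ / 2))
    (hgaussψ : ∀ i, Measure.map (ψ i) μ = gaussianReal 0 (Δ / 2))
    (YL2 YS1 YS2 : ℕ → Ω → ℝ)
    (hL20 : ∀ ω, YL2 0 ω = y0) (hS10 : ∀ ω, YS1 0 ω = y0) (hS20 : ∀ ω, YS2 0 ω = y0)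
    (hL2rec : ∀ i ω, YL2 (i + 1) ω
      = YL2 i ω * exp (-(1 / τ + σ ^ 2 / 2) * (Δ : ℝ) + σ * ξ i ω) + μ' * (Δ : ℝ))
    (hS1rec : ∀ i ω, YS1 (i + 1) ω
      = (YS1 i ω + μ' * (Δ : ℝ) / 2) * exp (-(1 / τ + σ ^ 2 / 2) * (Δ : ℝ) + σ * ξ i ω)
        + μ' * (Δ : ℝ) / 2)
    (hS2rec : ∀ i ω, YS2 (i + 1) ω
      = YS2 i ω * exp (-(1 / τ + σ ^ 2 / 2) * (Δ : ℝ) + σ * (φ i ω + ψ i ω))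
        + μ' * (Δ : ℝ) * exp (-(1 / τ + σ ^ 2 / 2) * ((Δ : ℝ) / 2) + σ * ψ i ω)) :
    Tendsto (fun i : ℕ => μ[YL2 i]) atTop
        (nhds (μ' * τ * (((Δ : ℝ) / τ) / (exp ((Δ : ℝ) / τ) - 1)) * exp ((Δ : ℝ) / τ)))
      ∧ Tendsto (fun i : ℕ => μ[YS1 i]) atTop
        (nhds (1 / 2 * (μ' * τ * (((Δ : ℝ) / τ) / (exp ((Δ : ℝ) / τ) - 1)))
          * (1 + exp ((Δ : ℝ) / τ))))
      ∧ Tendsto (fun i : ℕ => μ[YS2 i]) atTop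
        (nhds (μ' * τ * (((Δ : ℝ) / τ) / (exp ((Δ : ℝ) / τ) - 1))
          * exp ((Δ : ℝ) / (2 * τ)))) :=
  ⟨tendsto_integral_schemeL2 hτ hΔ hmeasξ hindepξ hgaussξ hL20 hL2rec,
    tendsto_integral_schemeS1 hτ hΔ hmeasξ hindepξ hgaussξ hS10 hS1rec,
    tendsto_integral_schemeS2 hτ hΔ hmeasφ hmeasψ hindepφψ hgaussφ hgaussψ hS20 hS2rec⟩

/-- The asymptotic means of the splitting schemes satisfy
`E[Y^{L2}_∞] = E[Y^{L1}_∞] e^{Δ/τ}`, `E[Y^{S1}_∞] = ½ E[Y^{L1}_∞](1 + e^{Δ/τ})` and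
`E[Y^{S2}_∞] = E[Y^{L1}_∞] e^{Δ/(2τ)}`, where
`E[Y^{L1}_∞] = μ'τ (Δ/τ)/(e^{Δ/τ} - 1)`. -/
theorem splitting_asymptotic_means
    {Ω : Type*} [MeasurableSpace Ω] (μ : Measure Ω) [IsProbabilityMeasure μ]
    (ξ φ ψ : ℕ → Ω → ℝ) (τ σ μ' y0 : ℝ) (Δ : NNReal)
    (hτ : 0 < τ) (hσ : 0 < σ) (hΔ : 0 < (Δ : ℝ))
    (hmeasξ : ∀ i, Measurable (ξ i))
    (hmeasφ : ∀ i, Measurable (φ i)) (hmeasψ : ∀ i, Measurable (ψ i))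
    (hindepξ : iIndepFun ξ μ)
    (hindepφψ : iIndepFun
      (fun p : ℕ × Bool => if p.2 then φ p.1 else ψ p.1) μ)
    (hgaussξ : ∀ i, Measure.map (ξ i) μ = gaussianReal 0 Δ)
    (hgaussφ : ∀ i, Measure.map (φ i) μ = gaussianReal 0 (Δ / 2))
    (hgaussψ : ∀ i, Measure.map (ψ i) μ = gaussianReal 0 (Δ / 2))
    (YL2 YS1 YS2 : ℕ → Ω → ℝ)
    (hL20 : ∀ ω, YL2 0 ω = y0) (hS10 : ∀ ω, YS1 0 ω = y0) (hS20 : ∀ ω, YS2 0 ω = y0)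
    (hL2rec : ∀ i ω, YL2 (i + 1) ω
      = YL2 i ω * exp (-(1 / τ + σ ^ 2 / 2) * (Δ : ℝ) + σ * ξ i ω) + μ' * (Δ : ℝ))
    (hS1rec : ∀ i ω, YS1 (i + 1) ω
      = (YS1 i ω + μ' * (Δ : ℝ) / 2) * exp (-(1 / τ + σ ^ 2 / 2) * (Δ : ℝ) + σ * ξ i ω)
        + μ' * (Δ : ℝ) / 2)
    (hS2rec : ∀ i ω, YS2 (i + 1) ω
      = YS2 i ω * exp (-(1 / τ + σ ^ 2 / 2) * (Δ : ℝ) + σ * (φ i ω + ψ i ω))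
        + μ' * (Δ : ℝ) * exp (-(1 / τ + σ ^ 2 / 2) * ((Δ : ℝ) / 2) + σ * ψ i ω)) :
    Tendsto (fun i : ℕ => μ[YL2 i]) atTop
        (nhds (μ' * τ * (((Δ : ℝ) / τ) / (exp ((Δ : ℝ) / τ) - 1)) * exp ((Δ : ℝ) / τ)))
      ∧ Tendsto (fun i : ℕ => μ[YS1 i]) atTop
        (nhds (1 / 2 * (μ' * τ * (((Δ : ℝ) / τ) / (exp ((Δ : ℝ) / τ) - 1)))
          * (1 + exp ((Δ : ℝ) / τ))))
      ∧ Tendsto (fun i : ℕ => μ[YS2 i]) atTop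
        (nhds (μ' * τ * (((Δ : ℝ) / τ) / (exp ((Δ : ℝ) / τ) - 1))
          * exp ((Δ : ℝ) / (2 * τ)))) :=
  splitting_asymptotic_means_general μ ξ φ ψ τ σ μ' y0 Δ hτ hΔ hmeasξ hmeasφ hmeasψ hindepξ hindepφψ
    hgaussξ hgaussφ hgaussψ YL2 YS1 YS2 hL20 hS10 hS20 hL2rec hS1rec hS2rec
end

section
/- If $\sigma^2\tau<2$, the asymptotic variances of the L1, L2 and S1 splitting schemes coincide and equal $\big(\mu\tau\frac{\Delta/\tau}{e^{\Delta/\tau}-1}\big)^2\cdot\frac{e^{2\Delta/\tau}(1-e^{\Delta\sigma^2})}{e^{\Delta\sigma^2}-e^{2\Delta/\tau}}$, independently of $\Delta>0$. -/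
/-!
Each scheme has the form `Y (i+1) = (Y i + u) * B i + w` with `u + w = μ' Δ` and i.i.d. lognormal
factors `B i = exp (-(1/τ + σ²/2) Δ + σ ξ i)`, for which `p := E[B] = e^{-Δ/τ}` and
`q := E[B²] = e^{Δσ² - 2Δ/τ}`. Since `Y i` depends only on `ξ 0, …, ξ (i-1)`, it is independent
of `B i`, so mean and variance obey the affine recurrences `m (i+1) = p m i + (p u + w)` and
`v (i+1) = q v i + (q - p²) (m i + u)²`. Both contract (`q < 1` is exactly `σ²τ < 2`), and the
limit `(q - p²) ((u + w) / (1 - p))² / (1 - q)` sees `u, w` only through `u + w = μ' Δ`.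
-/

open MeasureTheory ProbabilityTheory Filter Real
open scoped Topology NNReal

theorem tendsto_zero_of_recurrence_of_abs_lt_one {q : ℝ} (hq : |q| < 1) {y e : ℕ → ℝ}
    (he : Tendsto e atTop (𝓝 0)) (hrec : ∀ n, y (n + 1) = q * y n + e n) :
    Tendsto y atTop (𝓝 0) := by
  rw [Metric.tendsto_atTop] at he ⊢
  intro ε hε
  obtain ⟨N, hN⟩ := he (ε * (1 - |q|) / 2) (by have := sub_pos.2 hq; positivity)
  have hbound : ∀ k, |y (N + k)| ≤ |q| ^ k * |y N| + ε / 2 := by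
    intro k
    induction k with
    | zero => simp only [add_zero, pow_zero, one_mul, le_add_iff_nonneg_right]; positivity
    | succ k ih =>
      have he_k : |e (N + k)| ≤ ε * (1 - |q|) / 2 := by
        simpa using (hN (N + k) le_self_add).le
      calc |y (N + (k + 1))| = |q * y (N + k) + e (N + k)| := by rw [← add_assoc, hrec]
        _ ≤ |q| * |y (N + k)| + |e (N + k)| := by rw [← abs_mul]; exact abs_add_le _ _
        _ ≤ |q| * (|q| ^ k * |y N| + ε / 2) + ε * (1 - |q|) / 2 := by gcongr
        _ = |q| ^ (k + 1) * |y N| + ε / 2 := by ring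
  have hpow : Tendsto (fun k ↦ |q| ^ k * |y N|) atTop (𝓝 0) := by
    simpa using (tendsto_pow_atTop_nhds_zero_of_lt_one (abs_nonneg q) hq).mul_const |y N|
  obtain ⟨M, hM⟩ := eventually_atTop.1 (hpow.eventually (gt_mem_nhds (half_pos hε)))
  refine ⟨N + M, fun n hn ↦ ?_⟩
  obtain ⟨k, rfl⟩ := Nat.exists_eq_add_of_le (le_self_add.trans hn)
  rw [Real.dist_eq, sub_zero]
  linarith [hbound k, hM k (by omega)]

theorem tendsto_of_affine_recurrence_s14 {q β : ℝ} (hq : |q| < 1) {x b : ℕ → ℝ}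
    (hb : Tendsto b atTop (𝓝 β)) (hrec : ∀ n, x (n + 1) = q * x n + b n) :
    Tendsto x atTop (𝓝 (β / (1 - q))) := by
  have hq1 : 1 - q ≠ 0 := by linarith [(abs_lt.1 hq).2]
  have hfix : β / (1 - q) = q * (β / (1 - q)) + β := by field_simp; ring
  have h := tendsto_zero_of_recurrence_of_abs_lt_one hq (y := fun n ↦ x n - β / (1 - q))
    (by simpa using hb.sub_const β) (fun n ↦ by rw [hrec n]; linarith)
  simpa using h.add_const (β / (1 - q))

section Moments

variable {Ω : Type*} [MeasurableSpace Ω] {μ : Measure Ω} {X B : Ω → ℝ}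

theorem ProbabilityTheory.IndepFun.memLp_two_mul (hXB : X ⟂ᵢ[μ] B) (hX : MemLp X 2 μ)
    (hB : MemLp B 2 μ) : MemLp (X * B) 2 μ := by
  rw [memLp_two_iff_integrable_sq (hX.1.mul hB.1)]
  simp_rw [Pi.mul_apply, mul_pow]
  exact (hXB.comp (measurable_id.pow_const 2) (measurable_id.pow_const 2)).integrable_mul
    hX.integrable_sq hB.integrable_sq

theorem ProbabilityTheory.IndepFun.variance_mul [IsProbabilityMeasure μ] (hXB : X ⟂ᵢ[μ] B)
    (hX : MemLp X 2 μ) (hB : MemLp B 2 μ) :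
    Var[X * B; μ] = Var[X; μ] * μ[B ^ 2] + μ[X] ^ 2 * Var[B; μ] := by
  have hXB2 : IndepFun (X ^ 2) (B ^ 2) μ := by
    simpa only [Function.comp_def, Pi.pow_def] using
      hXB.comp (φ := fun x ↦ x ^ 2) (ψ := fun x ↦ x ^ 2) (by fun_prop) (by fun_prop)
  rw [variance_eq_sub (hXB.memLp_two_mul hX hB), variance_eq_sub hX, variance_eq_sub hB, mul_pow,
    hXB2.integral_mul_eq_mul_integral (hX.1.pow 2) (hB.1.pow 2),
    hXB.integral_mul_eq_mul_integral hX.1 hB.1]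
  ring

theorem ProbabilityTheory.IndepFun.memLp_two_affine_mul [IsFiniteMeasure μ] (hXB : X ⟂ᵢ[μ] B)
    (hX : MemLp X 2 μ) (hB : MemLp B 2 μ) (u w : ℝ) :
    MemLp (fun ω ↦ (X ω + u) * B ω + w) 2 μ :=
  ((hXB.comp (measurable_add_const u) measurable_id).memLp_two_mul
    (hX.add (memLp_const u)) hB).add (memLp_const w)

theorem ProbabilityTheory.IndepFun.integral_affine_mul [IsProbabilityMeasure μ]
    (hXB : X ⟂ᵢ[μ] B) (hX : Integrable X μ) (hB : Integrable B μ) (u w : ℝ) :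
    ∫ ω, (X ω + u) * B ω + w ∂μ = (μ[X] + u) * μ[B] + w := by
  have hXuB : (fun ω ↦ X ω + u) ⟂ᵢ[μ] B := hXB.comp (measurable_add_const u) measurable_id
  have hXu : Integrable (fun ω ↦ X ω + u) μ := hX.add (integrable_const u)
  have hXuB1 : Integrable (fun ω ↦ (X ω + u) * B ω) μ := hXuB.integrable_mul hXu hB
  rw [integral_add hXuB1 (integrable_const w),
    hXuB.integral_fun_mul_eq_mul_integral hXu.1 hB.1, integral_add hX (integrable_const u)]
  simp

theorem ProbabilityTheory.IndepFun.variance_affine_mul [IsProbabilityMeasure μ]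
    (hXB : X ⟂ᵢ[μ] B) (hX : MemLp X 2 μ) (hB : MemLp B 2 μ) (u w : ℝ) :
    Var[fun ω ↦ (X ω + u) * B ω + w; μ] = μ[B ^ 2] * Var[X; μ] + Var[B; μ] * (μ[X] + u) ^ 2 := by
  have hXuB : (fun ω ↦ X ω + u) ⟂ᵢ[μ] B := hXB.comp (measurable_add_const u) measurable_id
  have hXm := hX.aestronglyMeasurable
  have hBm := hB.aestronglyMeasurable
  rw [variance_add_const (by fun_prop), ← Pi.mul_def,
    hXuB.variance_mul (hX.add (memLp_const u)) hB, variance_add_const hXm,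
    integral_add (hX.integrable one_le_two) (integrable_const u)]
  simp only [Pi.pow_apply, integral_const, probReal_univ, smul_eq_mul, one_mul]
  ring

end Moments

theorem ProbabilityTheory.iIndepFun.indepFun_of_measurable_iSup_lt {Ω ι β γ : Type*}
    [MeasurableSpace Ω] {μ : Measure Ω} [Preorder ι] [mβ : MeasurableSpace β]
    [MeasurableSpace γ] {ξ : ι → Ω → β} (hξ : iIndepFun ξ μ) (hmeas : ∀ i, Measurable (ξ i))
    {i : ι} {Y : Ω → γ} (hY : Measurable[⨆ j < i, mβ.comap (ξ j)] Y) :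
    Y ⟂ᵢ[μ] ξ i := by
  have h := indep_iSup_of_disjoint (fun j ↦ (hmeas j).comap_le) hξ.iIndep
    (S := Set.Iio i) (T := {i}) (by simp)
  rw [iSup_singleton] at h
  exact indep_of_indep_of_le_left h hY.comap_le

section AffineRecurrence

variable {Ω : Type*} {B Y : ℕ → Ω → ℝ} {y₀ u w : ℝ}

theorem measurable_iSup_lt_of_affine_recurrence (h0 : ∀ ω, Y 0 ω = y₀)
    (hrec : ∀ i ω, Y (i + 1) ω = (Y i ω + u) * B i ω + w) (i : ℕ) :
    Measurable[⨆ j < i, MeasurableSpace.comap (B j) inferInstance] (Y i) := by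
  induction i with
  | zero => rw [funext h0]; exact measurable_const
  | succ i ih =>
    have hY : Measurable[⨆ j < i + 1, MeasurableSpace.comap (B j) inferInstance] (Y i) :=
      ih.mono (biSup_mono fun j hj ↦ Nat.lt_succ_of_lt hj) le_rfl
    have hBi : Measurable[⨆ j < i + 1, MeasurableSpace.comap (B j) inferInstance] (B i) :=
      (comap_measurable (B i)).mono
        (le_iSup₂ (f := fun j (_ : j < i + 1) ↦ MeasurableSpace.comap (B j) inferInstance) i
          i.lt_succ_self) le_rfl
    rw [funext (hrec i)]
    exact ((hY.add_const u).mul hBi).add_const w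

theorem tendsto_variance_of_affine_recurrence [MeasurableSpace Ω] {μ : Measure Ω}
    [IsProbabilityMeasure μ]
    (hB : ∀ i, Measurable (B i)) (hindep : iIndepFun B μ) (hBL2 : ∀ i, MemLp (B i) 2 μ)
    {p q : ℝ} (hp : ∀ i, μ[B i] = p) (hq : ∀ i, μ[B i ^ 2] = q) (hp1 : |p| < 1) (hq1 : |q| < 1)
    (h0 : ∀ ω, Y 0 ω = y₀) (hrec : ∀ i ω, Y (i + 1) ω = (Y i ω + u) * B i ω + w) :
    Tendsto (fun i ↦ Var[Y i; μ]) atTop (𝓝 ((q - p ^ 2) * ((u + w) / (1 - p)) ^ 2 / (1 - q))) := by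
  have hindepY (i : ℕ) : Y i ⟂ᵢ[μ] B i :=
    hindep.indepFun_of_measurable_iSup_lt hB (measurable_iSup_lt_of_affine_recurrence h0 hrec i)
  have hYL2 (i : ℕ) : MemLp (Y i) 2 μ := by
    induction i with
    | zero => rw [funext h0]; exact memLp_const y₀
    | succ i ih => rw [funext (hrec i)]; exact (hindepY i).memLp_two_affine_mul ih (hBL2 i) u w
  have hmean (i : ℕ) : μ[Y (i + 1)] = p * μ[Y i] + (p * u + w) := by
    rw [funext (hrec i), (hindepY i).integral_affine_mul ((hYL2 i).integrable one_le_two)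
      ((hBL2 i).integrable one_le_two), hp]
    ring
  have hvar (i : ℕ) : Var[Y (i + 1); μ] = q * Var[Y i; μ] + (q - p ^ 2) * (μ[Y i] + u) ^ 2 := by
    rw [funext (hrec i), (hindepY i).variance_affine_mul (hYL2 i) (hBL2 i),
      variance_eq_sub (hBL2 i), hp, hq]
  have hp1' : 1 - p ≠ 0 := by linarith [(abs_lt.1 hp1).2]
  have hlim : (p * u + w) / (1 - p) + u = (u + w) / (1 - p) := by field_simp; ring
  have hm := tendsto_of_affine_recurrence_s14 (x := fun i ↦ μ[Y i]) hp1 tendsto_const_nhds hmean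
  refine tendsto_of_affine_recurrence_s14 hq1 ?_ hvar
  simpa only [hlim] using ((hm.add_const u).pow 2).const_mul (q - p ^ 2)

end AffineRecurrence

section Gaussian

variable {Ω : Type*} [MeasurableSpace Ω] {μ : Measure Ω} {X : Ω → ℝ} {v : ℝ≥0}

theorem integral_exp_const_add_mul_of_map_eq_gaussianReal (hX : μ.map X = gaussianReal 0 v)
    (a t : ℝ) : ∫ ω, exp (a + t * X ω) ∂μ = exp (a + v * t ^ 2 / 2) := by
  simp_rw [exp_add a, integral_const_mul]
  rw [← mgf, mgf_gaussianReal hX, zero_mul, zero_add]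

theorem integral_sq_exp_const_add_mul_of_map_eq_gaussianReal (hX : μ.map X = gaussianReal 0 v)
    (a t : ℝ) : ∫ ω, exp (a + t * X ω) ^ 2 ∂μ = exp (2 * a + 2 * v * t ^ 2) := by
  simp_rw [sq (exp _), ← exp_add, ← two_mul, mul_add, ← mul_assoc,
    integral_exp_const_add_mul_of_map_eq_gaussianReal hX]
  ring_nf

theorem memLp_two_exp_const_add_mul_of_map_eq_gaussianReal (hX : μ.map X = gaussianReal 0 v)
    (a t : ℝ) : MemLp (fun ω ↦ exp (a + t * X ω)) 2 μ := by
  have hmeas : AEMeasurable X μ := aemeasurable_of_map_neZero (by rw [hX]; infer_instance)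
  refine (memLp_two_iff_integrable_sq (by fun_prop)).2 (Integrable.of_integral_ne_zero ?_)
  rw [integral_sq_exp_const_add_mul_of_map_eq_gaussianReal hX]
  exact (exp_pos _).ne'

end Gaussian

theorem exp_mul_sq_lt_exp_div_sq {τ σ Δ : ℝ} (hτ : 0 < τ) (hΔ : 0 < Δ) (hstat : σ ^ 2 * τ < 2) :
    exp (Δ * σ ^ 2) < exp (Δ / τ) ^ 2 := by
  rw [sq (exp _), ← exp_add, exp_lt_exp, ← add_div, lt_div_iff₀ hτ]
  nlinarith

theorem stationary_variance_eq {τ σ c Δ : ℝ} (hτ : 0 < τ) (hΔ : 0 < Δ) (hstat : σ ^ 2 * τ < 2) :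
    (exp (Δ * σ ^ 2) / exp (Δ / τ) ^ 2 - (exp (Δ / τ))⁻¹ ^ 2)
        * (c * Δ / (1 - (exp (Δ / τ))⁻¹)) ^ 2 / (1 - exp (Δ * σ ^ 2) / exp (Δ / τ) ^ 2)
      = (c * τ * ((Δ / τ) / (exp (Δ / τ) - 1))) ^ 2
          * (exp (2 * Δ / τ) * (1 - exp (Δ * σ ^ 2)) / (exp (Δ * σ ^ 2) - exp (2 * Δ / τ))) := by
  have hE := (sub_pos.2 (one_lt_exp_iff.2 (div_pos hΔ hτ))).ne'
  have hE0 := exp_ne_zero (Δ / τ)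
  have hGE := (exp_mul_sq_lt_exp_div_sq hτ hΔ hstat).ne
  rw [show exp (2 * Δ / τ) = exp (Δ / τ) ^ 2 by rw [sq, ← exp_add]; ring_nf]
  set E := exp (Δ / τ)
  set G := exp (Δ * σ ^ 2)
  have hGE₁ : G - E ^ 2 ≠ 0 := sub_ne_zero.2 hGE
  have hGE₂ : E ^ 2 - G ≠ 0 := sub_ne_zero.2 hGE.symm
  field_simp
  ring

theorem splitting_asymptotic_variances_L1_L2_S1_general
    {Ω : Type*} [MeasurableSpace Ω] (μ : Measure Ω) [IsProbabilityMeasure μ]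
    (ξ : ℕ → Ω → ℝ) (τ σ μ' y0 : ℝ) (Δ : NNReal)
    (hτ : 0 < τ) (hΔ : 0 < (Δ : ℝ))
    (hmeas : ∀ i, Measurable (ξ i))
    (hindep : iIndepFun ξ μ)
    (hgauss : ∀ i, Measure.map (ξ i) μ = gaussianReal 0 Δ)
    (YL1 YL2 YS1 : ℕ → Ω → ℝ)
    (hL10 : ∀ ω, YL1 0 ω = y0) (hL20 : ∀ ω, YL2 0 ω = y0) (hS10 : ∀ ω, YS1 0 ω = y0)
    (hL1rec : ∀ i ω, YL1 (i + 1) ω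
      = exp (-(1 / τ + σ ^ 2 / 2) * (Δ : ℝ) + σ * ξ i ω) * (YL1 i ω + μ' * (Δ : ℝ)))
    (hL2rec : ∀ i ω, YL2 (i + 1) ω
      = YL2 i ω * exp (-(1 / τ + σ ^ 2 / 2) * (Δ : ℝ) + σ * ξ i ω) + μ' * (Δ : ℝ))
    (hS1rec : ∀ i ω, YS1 (i + 1) ω
      = (YS1 i ω + μ' * (Δ : ℝ) / 2) * exp (-(1 / τ + σ ^ 2 / 2) * (Δ : ℝ) + σ * ξ i ω)
        + μ' * (Δ : ℝ) / 2)
    (hstat : σ ^ 2 * τ < 2) :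
    ∀ Y ∈ [YL1, YL2, YS1],
      Tendsto (fun i : ℕ => variance (Y i) μ) atTop
        (nhds ((μ' * τ * (((Δ : ℝ) / τ) / (exp ((Δ : ℝ) / τ) - 1))) ^ 2
          * (exp (2 * (Δ : ℝ) / τ) * (1 - exp ((Δ : ℝ) * σ ^ 2)) /
              (exp ((Δ : ℝ) * σ ^ 2) - exp (2 * (Δ : ℝ) / τ))))) := by
  set B : ℕ → Ω → ℝ := fun i ω ↦ exp (-(1 / τ + σ ^ 2 / 2) * Δ + σ * ξ i ω)
  have hmean (i : ℕ) : μ[B i] = (exp (Δ / τ))⁻¹ := by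
    rw [integral_exp_const_add_mul_of_map_eq_gaussianReal (hgauss i), ← exp_neg]
    ring_nf
  have hsq (i : ℕ) : μ[B i ^ 2] = exp (Δ * σ ^ 2) / exp (Δ / τ) ^ 2 := by
    rw [Pi.pow_def, integral_sq_exp_const_add_mul_of_map_eq_gaussianReal (hgauss i),
      sq (exp (Δ / τ)), ← exp_add, ← exp_sub]
    ring_nf
  rw [← stationary_variance_eq hτ hΔ hstat]
  set p := (exp (Δ / τ))⁻¹
  set q := exp (Δ * σ ^ 2) / exp (Δ / τ) ^ 2
  have hp : |p| < 1 := by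
    rw [abs_of_pos (by positivity)]
    exact inv_lt_one_of_one_lt₀ (one_lt_exp_iff.2 (by positivity))
  have hq : |q| < 1 := by
    rw [abs_of_pos (by positivity), div_lt_one (by positivity)]
    exact exp_mul_sq_lt_exp_div_sq hτ hΔ hstat
  have key (Y : ℕ → Ω → ℝ) (u w : ℝ) (huw : u + w = μ' * Δ) (h0 : ∀ ω, Y 0 ω = y0)
      (hrec : ∀ i ω, Y (i + 1) ω = (Y i ω + u) * B i ω + w) :
      Tendsto (fun i ↦ Var[Y i; μ]) atTop (𝓝 ((q - p ^ 2) * (μ' * Δ / (1 - p)) ^ 2 / (1 - q))) := by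
    rw [← huw]
    exact tendsto_variance_of_affine_recurrence (B := B) (fun i ↦ by have := hmeas i; fun_prop)
      (hindep.comp (fun _ x ↦ exp (-(1 / τ + σ ^ 2 / 2) * Δ + σ * x)) fun _ ↦ by fun_prop)
      (fun i ↦ memLp_two_exp_const_add_mul_of_map_eq_gaussianReal (hgauss i) _ _)
      hmean hsq hp hq h0 hrec
  simp only [List.mem_cons, List.not_mem_nil, or_false]
  rintro Y (rfl | rfl | rfl)
  · exact key _ (μ' * Δ) 0 (by ring) hL10 fun i ω ↦ by rw [hL1rec]; ring
  · exact key _ 0 (μ' * Δ) (by ring) hL20 fun i ω ↦ by rw [hL2rec]; ring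
  · exact key _ (μ' * Δ / 2) (μ' * Δ / 2) (by ring) hS10 hS1rec

/-- If `σ²τ < 2`, the asymptotic variances of the L1, L2 and S1 splitting
schemes coincide and equal
`(μ'τ (Δ/τ)/(e^{Δ/τ}-1))² ⬝ e^{2Δ/τ}(1 - e^{Δσ²})/(e^{Δσ²} - e^{2Δ/τ})`,
independently of the step `Δ > 0`. -/
theorem splitting_asymptotic_variances_L1_L2_S1
    {Ω : Type*} [MeasurableSpace Ω] (μ : Measure Ω) [IsProbabilityMeasure μ]
    (ξ : ℕ → Ω → ℝ) (τ σ μ' y0 : ℝ) (Δ : NNReal)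
    (hτ : 0 < τ) (hσ : 0 < σ) (hΔ : 0 < (Δ : ℝ))
    (hmeas : ∀ i, Measurable (ξ i))
    (hindep : iIndepFun ξ μ)
    (hgauss : ∀ i, Measure.map (ξ i) μ = gaussianReal 0 Δ)
    (YL1 YL2 YS1 : ℕ → Ω → ℝ)
    (hL10 : ∀ ω, YL1 0 ω = y0) (hL20 : ∀ ω, YL2 0 ω = y0) (hS10 : ∀ ω, YS1 0 ω = y0)
    (hL1rec : ∀ i ω, YL1 (i + 1) ω
      = exp (-(1 / τ + σ ^ 2 / 2) * (Δ : ℝ) + σ * ξ i ω) * (YL1 i ω + μ' * (Δ : ℝ)))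
    (hL2rec : ∀ i ω, YL2 (i + 1) ω
      = YL2 i ω * exp (-(1 / τ + σ ^ 2 / 2) * (Δ : ℝ) + σ * ξ i ω) + μ' * (Δ : ℝ))
    (hS1rec : ∀ i ω, YS1 (i + 1) ω
      = (YS1 i ω + μ' * (Δ : ℝ) / 2) * exp (-(1 / τ + σ ^ 2 / 2) * (Δ : ℝ) + σ * ξ i ω)
        + μ' * (Δ : ℝ) / 2)
    (hstat : σ ^ 2 * τ < 2) :
    ∀ Y ∈ [YL1, YL2, YS1],
      Tendsto (fun i : ℕ => variance (Y i) μ) atTop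
        (nhds ((μ' * τ * (((Δ : ℝ) / τ) / (exp ((Δ : ℝ) / τ) - 1))) ^ 2
          * (exp (2 * (Δ : ℝ) / τ) * (1 - exp ((Δ : ℝ) * σ ^ 2)) /
              (exp ((Δ : ℝ) * σ ^ 2) - exp (2 * (Δ : ℝ) / τ))))) :=
  splitting_asymptotic_variances_L1_L2_S1_general μ ξ τ σ μ' y0 Δ hτ hΔ hmeas hindep hgauss YL1 YL2
    YS1 hL10 hL20 hS10 hL1rec hL2rec hS1rec hstat
end
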